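/- arXiv:2210.15045 — 3 statements merged into one kernel-verified Lean document; each statement's English description precedes it below -/
import Mathlib

section
/- Let Q be a tree network and define α* as the infimum of all α such that the closure of E(Q,α) equals Q. Then the local root ∩_{0<α<α*} E⁰(Q,α) (the intersection of the cores over all α < α*) is a singleton {x*}. -/
open MeasureTheory Set

/-- The extremity set `E(Q,α)` of a tree network. -/
def extremitySet {X : Type*} [MeasurableSpace X] (lam : Measure X)
    (regular : Set X) (comp1 comp2 : X → Set X) (α : ℝ) : Set X :=
  {x ∈ regular | min (lam (comp1 x)) (lam (comp2 x)) < ENNReal.ofReal (α / 2)}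

/-- The core `E⁰(Q,α)`: the closure of the complement of the closure of the
extremity set. -/
def core {X : Type*} [TopologicalSpace X] [MeasurableSpace X] (lam : Measure X)
    (regular : Set X) (comp1 comp2 : X → Set X) (α : ℝ) : Set X :=
  closure ((closure (extremitySet lam regular comp1 comp2 α))ᶜ)

/-- The threshold `α*`: the infimum of all `α` for which the closure of the
extremity set is all of `Q`. -/
noncomputable def alphaStar {X : Type*} [TopologicalSpace X] [MeasurableSpace X]
    (lam : Measure X) (regular : Set X) (comp1 comp2 : X → Set X) : ℝ :=
  sInf {α : ℝ | closure (extremitySet lam regular comp1 comp2 α) = Set.univ}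

lemma core_anti {X : Type*} [TopologicalSpace X] [MeasurableSpace X] (lam : Measure X)
    (regular : Set X) (comp1 comp2 : X → Set X) {α β : ℝ} (h : α ≤ β) :
    core lam regular comp1 comp2 β ⊆ core lam regular comp1 comp2 α := by
  apply closure_mono
  apply compl_subset_compl.2
  apply closure_mono
  rintro x ⟨hx, hx2⟩
  exact ⟨hx, hx2.trans_le (ENNReal.ofReal_le_ofReal (by linarith))⟩

/-- The local root of a tree network `Q`, i.e. the intersection
`⋂_{0<α<α*} E⁰(Q,α)` of the cores, is a singleton `{x*}`. The tree-network
hypotheses used: `Q` is a compact connected metric tree with length measure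
`lam`, the cores are nonempty, compact and connected for `0 < α < α*`, any
connected set containing two points has length at least their distance, and
the length of the core tends to `0` as `α → α*` from below. -/
theorem stmt_5 {X : Type*} [MetricSpace X] [MeasurableSpace X] [CompactSpace X]
    (lam : Measure X) (regular : Set X) (comp1 comp2 : X → Set X)
    (hQconn : IsConnected (Set.univ : Set X))
    (hcomp : ∀ x ∈ regular, comp1 x ∪ comp2 x = {x}ᶜ ∧ Disjoint (comp1 x) (comp2 x)
      ∧ lam (comp1 x) + lam (comp2 x) = lam Set.univ)
    (hlen : ∀ A : Set X, IsConnected A → ∀ x ∈ A, ∀ y ∈ A,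
      ENNReal.ofReal (dist x y) ≤ lam A)
    (hastar : 0 < alphaStar lam regular comp1 comp2)
    (hcore : ∀ α ∈ Set.Ioo 0 (alphaStar lam regular comp1 comp2),
      (core lam regular comp1 comp2 α).Nonempty
      ∧ IsCompact (core lam regular comp1 comp2 α)
      ∧ IsConnected (core lam regular comp1 comp2 α))
    (hto0 : Filter.Tendsto (fun α => lam (core lam regular comp1 comp2 α))
      (nhdsWithin (alphaStar lam regular comp1 comp2)
        (Set.Iio (alphaStar lam regular comp1 comp2))) (nhds 0)) :
    ∃ xstar : X,
      (⋂ α ∈ Set.Ioo 0 (alphaStar lam regular comp1 comp2),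
        core lam regular comp1 comp2 α) = {xstar} := by
  set astar := alphaStar lam regular comp1 comp2
  set S := Set.Ioo 0 astar
  have hSne : S.Nonempty := ⟨astar / 2, by constructor <;> [linarith; linarith]⟩
  haveI : Nonempty S := hSne.to_subtype
  -- nonempty intersection
  have hdir : Directed (· ⊇ ·) (fun α : S => core lam regular comp1 comp2 α) := by
    intro a b
    rcases le_total (a : ℝ) b with h | h
    · exact ⟨b, core_anti _ _ _ _ h, subset_rfl⟩
    · exact ⟨a, subset_rfl, core_anti _ _ _ _ h⟩
  have hne : (⋂ α : S, core lam regular comp1 comp2 α).Nonempty :=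
    IsCompact.nonempty_iInter_of_directed_nonempty_isCompact_isClosed _ hdir
      (fun α => (hcore α α.2).1) (fun α => (hcore α α.2).2.1)
      (fun α => isClosed_closure)
  obtain ⟨x, hx⟩ := hne
  refine ⟨x, ?_⟩
  have hxmem : ∀ α ∈ S, x ∈ core lam regular comp1 comp2 α := by
    intro α hα
    exact Set.mem_iInter.1 hx ⟨α, hα⟩
  apply Set.eq_singleton_iff_unique_mem.2
  refine ⟨Set.mem_iInter₂.2 hxmem, ?_⟩
  intro y hy
  have hymem : ∀ α ∈ S, y ∈ core lam regular comp1 comp2 α := Set.mem_iInter₂.1 hy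
  -- distance bound
  have hd : ENNReal.ofReal (dist y x) ≤ 0 := by
    refine ge_of_tendsto hto0 ?_
    have hS : S ∈ nhdsWithin astar (Set.Iio astar) := by
      rw [mem_nhdsWithin_iff_exists_mem_nhds_inter]
      exact ⟨Set.Ioi 0, Ioi_mem_nhds hastar, by
        rintro z ⟨hz1, hz2⟩; exact ⟨hz1, hz2⟩⟩
    filter_upwards [hS] with α hα
    exact hlen _ ((hcore α hα).2.2) y (hymem α hα) x (hxmem α hα)
  have : dist y x ≤ 0 :=
    ENNReal.ofReal_eq_zero.1 (le_antisymm (le_zero_iff.1 hd).le zero_le)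
  exact dist_le_zero.1 this
end

section
/- Under the tree attack strategy measure e on a tree of length μ with extremity set of length λ(E), each subtree E^j (j ≥ 1) of the subtree decomposition has density e(E^j)/λ(E^j) = 2/(μ+λ(E)), and consequently any subtree Z of E^j containing the local root x_j satisfies e(Z)/λ(Z) ≤ 2/(μ+λ(E)). -/
/-- Density property of the tree attack strategy: the subtree `E^j` of the
subtree decomposition receives attack probability `e(E^j) = 2λ(E^j)/(μ+λ(E))`
distributed within `E^j` according to the EBD distribution `h` rooted at the
local root `x_j`, so `E^j` has density `2/(μ+λ(E))`, and any subtree `Z` of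
`E^j` containing `x_j` has density `e(Z)/λ(Z) ≤ 2/(μ+λ(E))`. -/
theorem stmt_9 {X : Type*} (lam h e : Set X → ℝ) (Ej Z : Set X) (xj : X)
    (μ lamE : ℝ) (hμ : 0 < μ) (hlamE : 0 ≤ lamE)
    (hEjpos : 0 < lam Ej) (hZpos : 0 < lam Z)
    (hprob : h Ej = 1) (hhnn : ∀ A, 0 ≤ h A)
    (he : ∀ A : Set X, A ⊆ Ej → e A = (2 * lam Ej / (μ + lamE)) * h A)
    (hEBD : h Z / lam Z ≤ h Ej / lam Ej)
    (hxZ : xj ∈ Z) (hZEj : Z ⊆ Ej) :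
    e Ej / lam Ej = 2 / (μ + lamE) ∧ e Z / lam Z ≤ 2 / (μ + lamE) := by
  have hpos : 0 < μ + lamE := by linarith
  have hEj := he Ej (subset_refl _)
  have hZ := he Z hZEj
  constructor
  · rw [hEj, hprob]
    field_simp
  · rw [hZ]
    have h1 : h Z / lam Z ≤ 1 / lam Ej := by rwa [hprob] at hEBD
    have h2 : h Z ≤ lam Z / lam Ej := by
      rw [div_le_div_iff₀ hZpos hEjpos] at h1
      rw [le_div_iff₀ hEjpos]; linarith
    have hc : 0 ≤ 2 * lam Ej / (μ + lamE) := by positivity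
    calc 2 * lam Ej / (μ + lamE) * h Z / lam Z
        ≤ 2 * lam Ej / (μ + lamE) * (lam Z / lam Ej) / lam Z := by
          gcongr
      _ = 2 / (μ + lamE) := by field_simp
end

section
/- Let K_{2n} (n ≥ 2) be a complete network with total length μ and girth g (minimum length of a circuit). Then for any 1-factorization F of K_{2n}, we have μ − δ(F) ≥ (n(n−1)/2)·g, where δ(F) = max_i λ(F_i). -/
open Finset SimpleGraph

lemma fourCycle' {V : Type*} [DecidableEq V] {g : ℝ} (a b c d : V)
    (hab : a ≠ b) (hcd : c ≠ d) (hac : a ≠ c) (had : a ≠ d) (hbc : b ≠ c) (hbd : b ≠ d)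
    (length : Sym2 V → ℝ)
    (hgirth : ∀ (v : V) (w : (⊤ : SimpleGraph V).Walk v v), w.IsCycle →
      g ≤ (w.edges.map length).sum) :
    g ≤ length s(a,c) + (length s(c,b) + (length s(b,d) + (length s(d,a) + 0))) := by
  have := hgirth a (Walk.cons (v := c) (by simp [hac]) (Walk.cons (v := b) (by simp [hbc.symm])
    (Walk.cons (v := d) (by simp [hbd]) (Walk.cons (v := a) (by simp [had.symm]) .nil))))
  simp only [Walk.edges_cons, Walk.edges_nil, List.map_cons, List.map_nil, List.sum_cons,
    List.sum_nil] at this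
  apply this
  simp [Walk.isCycle_def, Walk.isTrail_def, List.Nodup, Sym2.eq_iff]
  tauto

/-- For a complete network `K_{2n}` (`n ≥ 2`) with total length `μ` and girth
`g` (every circuit has length at least `g`), and any 1-factorization
`M₁, …, M_{2n−1}`, we have `μ − δ(F) ≥ (n(n−1)/2)·g`, where
`δ(F) = max_i λ(M_i)`. -/
theorem stmt_13 {V : Type*} [Fintype V] [DecidableEq V]
    (n : ℕ) (hn : 2 ≤ n) (hcard : Fintype.card V = 2 * n)
    (length : Sym2 V → ℝ)
    (hlen : ∀ e : Sym2 V, ¬ e.IsDiag → 0 < length e)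
    (μ : ℝ) (hμ : μ = ∑ e ∈ Finset.univ.filter (fun e : Sym2 V => ¬ e.IsDiag), length e)
    (g : ℝ) (hg : 0 < g)
    (hgirth : ∀ (v : V) (w : (⊤ : SimpleGraph V).Walk v v), w.IsCycle →
      g ≤ (w.edges.map length).sum)
    (M : Fin (2 * n - 1) → Finset (Sym2 V))
    (hM : ∀ i, ∀ e ∈ M i, ¬ e.IsDiag)
    (hmatch : ∀ i, ∀ v : V, ∃! e, e ∈ M i ∧ v ∈ e)
    (hpart : ∀ e : Sym2 V, ¬ e.IsDiag → ∃! i, e ∈ M i)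
    (δ : ℝ) (hδ : IsGreatest (Set.range fun i => ∑ e ∈ M i, length e) δ) :
    (n * (n - 1) / 2 : ℝ) * g ≤ μ - δ := by
  obtain ⟨⟨j, hj⟩, -⟩ := hδ
  simp only at hj
  -- the matching function
  set m : V → Sym2 V := fun v => (hmatch j v).choose with hm_def
  have hmem : ∀ v, m v ∈ M j ∧ v ∈ m v := fun v => (hmatch j v).choose_spec.1
  have huniq : ∀ v e, e ∈ M j → v ∈ e → e = m v := fun v e he hv =>
    (hmatch j v).choose_spec.2 e ⟨he, hv⟩
  -- the set of cross edges
  set D : Finset (Sym2 V) := univ.filter (fun e => ¬ e.IsDiag ∧ e ∉ M j) with hD_def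
  have hmD : ∀ u v : V, s(u,v) ∈ D ↔ m u ≠ m v := by
    intro u v
    simp only [hD_def, mem_filter, mem_univ, true_and, Sym2.isDiag_iff_proj_eq]
    constructor
    · rintro ⟨h1, h2⟩ heq
      have h3 : u ∈ m u ∧ v ∈ m u := ⟨(hmem u).2, heq ▸ (hmem v).2⟩
      rw [Sym2.mem_and_mem_iff h1] at h3
      exact h2 (h3 ▸ (hmem u).1)
    · intro hne
      have h1 : ¬ (u = v) := fun h => hne (h ▸ rfl)
      refine ⟨h1, fun hmem' => hne ?_⟩
      rw [← huniq u _ hmem' (by simp), ← huniq v _ hmem' (by simp)]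
  -- |M j| = n
  have hMcard : (M j).card = n := by
    have h1 : ∀ e ∈ M j, (univ.filter (fun v => m v = e)).card = 2 := by
      intro e
      induction e using Sym2.ind with
      | _ a b =>
        intro he
        have hab : a ≠ b := by
          have := hM j _ he; rwa [Sym2.isDiag_iff_proj_eq] at this
        have heq : univ.filter (fun v => m v = s(a,b)) = {a, b} := by
          ext v
          simp only [mem_filter, mem_univ, true_and, mem_insert, mem_singleton]
          constructor
          · intro h
            have hv := (hmem v).2
            rw [h] at hv
            rwa [Sym2.mem_iff] at hv
          · rintro (rfl | rfl)
            · exact (huniq v _ he (by simp)).symm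
            · exact (huniq v _ he (by simp)).symm
        rw [heq, card_insert_of_notMem (by simp [hab]), card_singleton]
    have h2 := Finset.card_eq_sum_card_fiberwise
      (fun v (_ : v ∈ (univ : Finset V)) => (hmem v).1)
    rw [Finset.card_univ, hcard, Finset.sum_congr rfl h1, Finset.sum_const, smul_eq_mul] at h2
    omega
  set T : Finset (Sym2 (Sym2 V)) := (M j).offDiag.image Sym2.mk.uncurry with hT_def
  have hTcard : 2 * T.card = n * n - n := by
    rw [hT_def, Sym2.two_mul_card_image_offDiag, offDiag_card, hMcard]
  -- the fiber bound
  have hfibbound : ∀ P ∈ T, g ≤ ∑ e ∈ D.filter (fun e => Sym2.map m e = P), length e := by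
    intro P hP
    rw [hT_def, mem_image] at hP
    obtain ⟨⟨f, f'⟩, hff, rfl⟩ := hP
    rw [mem_offDiag] at hff
    obtain ⟨hf, hf', hne⟩ := hff
    induction f using Sym2.ind with
    | _ a b =>
    induction f' using Sym2.ind with
    | _ c d =>
    have hab : a ≠ b := by
      have := hM j _ hf; rwa [Sym2.isDiag_iff_proj_eq] at this
    have hcd : c ≠ d := by
      have := hM j _ hf'; rwa [Sym2.isDiag_iff_proj_eq] at this
    have hma : m a = s(a,b) := (huniq a _ hf (by simp)).symm
    have hmb : m b = s(a,b) := (huniq b _ hf (by simp)).symm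
    have hmc : m c = s(c,d) := (huniq c _ hf' (by simp)).symm
    have hmd : m d = s(c,d) := (huniq d _ hf' (by simp)).symm
    have key : ∀ x y : V, m x = s(a,b) → m y = s(c,d) → x ≠ y := by
      intro x y hx hy h
      exact hne (by rw [← hx, ← hy, h])
    have hac := key a c hma hmc
    have had := key a d hma hmd
    have hbc := key b c hmb hmc
    have hbd := key b d hmb hmd
    have hsubE : ({s(a,c), s(c,b), s(b,d), s(d,a)} : Finset (Sym2 V)) ⊆
        D.filter (fun e => Sym2.map m e = s(s(a,b), s(c,d))) := by
      intro e he
      simp only [mem_insert, mem_singleton] at he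
      rcases he with rfl | rfl | rfl | rfl <;> rw [mem_filter]
      · exact ⟨(hmD a c).mpr (by rw [hma, hmc]; exact hne),
          by rw [Sym2.map_pair_eq, hma, hmc]⟩
      · exact ⟨(hmD c b).mpr (by rw [hmc, hmb]; exact fun h => hne h.symm),
          by rw [Sym2.map_pair_eq, hmc, hmb, Sym2.eq_swap]⟩
      · exact ⟨(hmD b d).mpr (by rw [hmb, hmd]; exact hne),
          by rw [Sym2.map_pair_eq, hmb, hmd]⟩
      · exact ⟨(hmD d a).mpr (by rw [hmd, hma]; exact fun h => hne h.symm),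
          by rw [Sym2.map_pair_eq, hmd, hma, Sym2.eq_swap]⟩
    have hE4sum : ∑ e ∈ ({s(a,c), s(c,b), s(b,d), s(d,a)} : Finset (Sym2 V)), length e
        = length s(a,c) + (length s(c,b) + (length s(b,d) + (length s(d,a) + 0))) := by
      rw [Finset.sum_insert (by simp only [mem_insert, mem_singleton, Sym2.eq_iff]; tauto),
        Finset.sum_insert (by simp only [mem_insert, mem_singleton, Sym2.eq_iff]; tauto),
        Finset.sum_insert (by simp only [mem_singleton, Sym2.eq_iff]; tauto),
        Finset.sum_singleton, add_zero]
    calc g ≤ length s(a,c) + (length s(c,b) + (length s(b,d) + (length s(d,a) + 0))) :=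
          fourCycle' a b c d hab hcd hac had hbc hbd length hgirth
      _ = ∑ e ∈ ({s(a,c), s(c,b), s(b,d), s(d,a)} : Finset (Sym2 V)), length e := hE4sum.symm
      _ ≤ ∑ e ∈ D.filter (fun e => Sym2.map m e = s(s(a,b), s(c,d))), length e := by
          apply Finset.sum_le_sum_of_subset_of_nonneg hsubE
          intro e he _
          exact (hlen e ((mem_filter.1 ((mem_filter.1 he).1)).2.1)).le
  -- T is contained in the image of the fibering map
  have hsub : T ⊆ D.image (Sym2.map m) := by
    intro P hP
    rw [hT_def, mem_image] at hP
    obtain ⟨⟨f, f'⟩, hff, rfl⟩ := hP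
    rw [mem_offDiag] at hff
    obtain ⟨hf, hf', hne⟩ := hff
    induction f using Sym2.ind with
    | _ a b =>
    induction f' using Sym2.ind with
    | _ c d =>
    have hma : m a = s(a,b) := (huniq a _ hf (by simp)).symm
    have hmc : m c = s(c,d) := (huniq c _ hf' (by simp)).symm
    exact mem_image.mpr ⟨s(a,c), (hmD a c).mpr (by rw [hma, hmc]; exact hne),
      by rw [Sym2.map_pair_eq, hma, hmc]; rfl⟩
  -- split μ
  have hdisj : Disjoint (M j) D := by
    rw [Finset.disjoint_left]
    intro e he hDe
    exact ((mem_filter.1 hDe).2).2 he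
  have hunion : univ.filter (fun e : Sym2 V => ¬ e.IsDiag) = M j ∪ D := by
    ext e
    simp only [mem_filter, mem_univ, true_and, mem_union, hD_def]
    constructor
    · intro h
      by_cases he : e ∈ M j
      · exact Or.inl he
      · exact Or.inr ⟨h, he⟩
    · rintro (h | ⟨h, -⟩)
      · exact hM j e h
      · exact h
  have hμδ : μ - δ = ∑ e ∈ D, length e := by
    rw [hμ, hunion, Finset.sum_union hdisj, ← hj]; ring
  -- assemble
  have h1 : ∑ e ∈ D, length e
      = ∑ P ∈ D.image (Sym2.map m), ∑ e ∈ D.filter (fun e => Sym2.map m e = P), length e :=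
    (Finset.sum_fiberwise_of_maps_to (fun x hx => mem_image_of_mem _ hx) _).symm
  have h2 : ∑ P ∈ T, ∑ e ∈ D.filter (fun e => Sym2.map m e = P), length e
      ≤ ∑ P ∈ D.image (Sym2.map m), ∑ e ∈ D.filter (fun e => Sym2.map m e = P), length e := by
    apply Finset.sum_le_sum_of_subset_of_nonneg hsub
    intro P _ _
    exact Finset.sum_nonneg fun e he => (hlen e ((mem_filter.1 ((mem_filter.1 he).1)).2.1)).le
  have h3 : (T.card : ℝ) * g ≤ ∑ P ∈ T, ∑ e ∈ D.filter (fun e => Sym2.map m e = P), length e := by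
    calc (T.card : ℝ) * g = ∑ _P ∈ T, g := by rw [Finset.sum_const, nsmul_eq_mul]
      _ ≤ _ := Finset.sum_le_sum hfibbound
  have h4 : n ≤ n * n := Nat.le_mul_of_pos_left n (by omega)
  have h5 : ((2 * T.card : ℕ) : ℝ) = ((n * n - n : ℕ) : ℝ) := by rw [hTcard]
  push_cast [Nat.cast_sub h4] at h5
  have hTcard' : (T.card : ℝ) = (n : ℝ) * ((n : ℝ) - 1) / 2 := by push_cast at h5 ⊢; nlinarith
  rw [hμδ, h1]
  calc (↑n * (↑n - 1) / 2 : ℝ) * g = (T.card : ℝ) * g := by rw [hTcard']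
    _ ≤ _ := le_trans h3 h2
end
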